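/- Let Δ be a connected locally complete intersection simplicial complex on V of dimension d−1 ≥ 1, and suppose there exist distinct vertices x_1, x_2, y with X_1Y, X_2Y ∈ I_Δ. Then there exist integers k, ℓ ≥ 2 and a labeling V = {x_1,…,x_k, y_1,…,y_ℓ} with y_1 = y such that: (i) X_iY_1 ∈ I_Δ for all i=1,…,k; (ii) Y_1Y_j ∉ I_Δ for all j=2,…,ℓ; and (iii) for each j=2,…,ℓ, at most one index i ∈ {1,…,k} satisfies X_iY_j ∉ I_Δ. -/

import Mathlib

open MvPolynomial

set_option synthInstance.maxHeartbeats 1000000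
set_option maxHeartbeats 1000000

/-- A simplicial complex whose vertices lie in `Fin n`: a family of finsets
("faces") containing `∅` and closed under taking subsets.  The vertex set of
the complex is the set of `v` with `{v}` a face. -/
structure SimComplex (n : ℕ) where
  faces : Set (Finset (Fin n))
  empty_mem : ∅ ∈ faces
  down_closed : ∀ {F G : Finset (Fin n)}, F ∈ faces → G ⊆ F → G ∈ faces

namespace SimComplex

variable {n m : ℕ}

/-- The vertex set of a complex. -/
def vertices (Δ : SimComplex n) : Set (Fin n) := {v | {v} ∈ Δ.faces}

/-- `Δ` is a simplicial complex on the full vertex set `[n] = Fin n`,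
i.e. every singleton is a face. -/
def OnFullVertexSet (Δ : SimComplex n) : Prop := ∀ v : Fin n, {v} ∈ Δ.faces

/-- The dimension of a simplicial complex, as an integer:
`max {#F : F a face} - 1`. -/
noncomputable def dim (Δ : SimComplex n) : ℤ :=
  (((Set.toFinite Δ.faces).toFinset.sup (fun F => F.card) : ℕ) : ℤ) - 1

/-- A facet is a face maximal under inclusion. -/
def IsFacet (Δ : SimComplex n) (F : Finset (Fin n)) : Prop :=
  F ∈ Δ.faces ∧ ∀ G ∈ Δ.faces, F ⊆ G → F = G

/-- A complex is pure if all facets have the same cardinality. -/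
def Pure (Δ : SimComplex n) : Prop :=
  ∀ F G : Finset (Fin n), Δ.IsFacet F → Δ.IsFacet G → F.card = G.card

/-- A complex is connected if it is not the union of two nonempty
subcomplexes supported on disjoint nonempty vertex sets. -/
def Connected (Δ : SimComplex n) : Prop :=
  ¬ ∃ V₁ V₂ : Set (Fin n), V₁.Nonempty ∧ V₂.Nonempty ∧ Disjoint V₁ V₂ ∧
      V₁ ∪ V₂ = Δ.vertices ∧
      ∀ F ∈ Δ.faces, ((F : Set (Fin n)) ⊆ V₁ ∨ (F : Set (Fin n)) ⊆ V₂)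

/-- The link of a face `F`:  `link Δ F = {G : G ∪ F ∈ Δ, G ∩ F = ∅}`. -/
def link (Δ : SimComplex n) (F : Finset (Fin n)) (hF : F ∈ Δ.faces) : SimComplex n where
  faces := {G | Disjoint G F ∧ G ∪ F ∈ Δ.faces}
  empty_mem := ⟨Finset.disjoint_empty_left F, by simpa using hF⟩
  down_closed := by
    rintro F' G ⟨hdis, hun⟩ hsub
    exact ⟨hdis.mono_left hsub,
      Δ.down_closed hun (Finset.union_subset_union hsub (subset_refl F))⟩

/-- The restriction `Δ_W` of `Δ` to a set `W` of vertices. -/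
def restrict (Δ : SimComplex n) (W : Set (Fin n)) : SimComplex n where
  faces := {F | F ∈ Δ.faces ∧ (F : Set (Fin n)) ⊆ W}
  empty_mem := ⟨Δ.empty_mem, by simp⟩
  down_closed := by
    rintro F G ⟨hF, hFW⟩ hsub
    exact ⟨Δ.down_closed hF hsub, le_trans (Finset.coe_subset.mpr hsub) hFW⟩

/-- The simplicial complex spanned by a family of finsets. -/
def ofFamily (H : Set (Finset (Fin n))) : SimComplex n where
  faces := {F | F = ∅ ∨ ∃ G ∈ H, F ⊆ G}
  empty_mem := Or.inl rfl
  down_closed := by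
    rintro F G (rfl | ⟨G', hG', hFG⟩) hGF
    · exact Or.inl (Finset.subset_empty.mp hGF)
    · exact Or.inr ⟨G', hG', hGF.trans hFG⟩

/-- The union of two complexes on the same ambient vertex set (used for
complexes supported on disjoint vertex sets). -/
def union (Δ₁ Δ₂ : SimComplex n) : SimComplex n where
  faces := Δ₁.faces ∪ Δ₂.faces
  empty_mem := Or.inl Δ₁.empty_mem
  down_closed := by
    rintro F G (h | h) hsub
    · exact Or.inl (Δ₁.down_closed h hsub)
    · exact Or.inr (Δ₂.down_closed h hsub)

/-- The `n`-gon: the pure one-dimensional complex with facets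
`{i, i+1 (mod n)}`. -/
def nGon (n : ℕ) : SimComplex n :=
  ofFamily {F | ∃ i j : Fin n, (j : ℕ) = ((i : ℕ) + 1) % n ∧ F = {i, j}}

/-- The `n`-pointed path: the one-dimensional complex with facets `{i, i+1}`,
`i = 1, …, n-1`. -/
def nPath (n : ℕ) : SimComplex n :=
  ofFamily {F | ∃ i j : Fin n, (j : ℕ) = (i : ℕ) + 1 ∧ F = {i, j}}

/-- An isomorphism of simplicial complexes: a relabeling of the vertices
carrying the faces of one complex bijectively onto the faces of the other. -/
def IsIsoTo (Δ : SimComplex n) (Γ : SimComplex m) : Prop :=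
  ∃ e : Fin n → Fin m, Set.InjOn e Δ.vertices ∧
    (∀ F : Finset (Fin n), F ∈ Δ.faces → F.image e ∈ Γ.faces) ∧
    (∀ G : Finset (Fin m), G ∈ Γ.faces → ∃ F ∈ Δ.faces, F.image e = G)

/-- A minimal nonface of `Δ`; these index the minimal monomial generators of
the Stanley–Reisner ideal. -/
def IsMinimalNonface (Δ : SimComplex n) (F : Finset (Fin n)) : Prop :=
  F ∉ Δ.faces ∧ ∀ G : Finset (Fin n), G ⊂ F → G ∈ Δ.faces

/-- The number of facets of maximal dimension; for a Stanley-Reisner ring this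
is its multiplicity. -/
noncomputable def facetMult (Δ : SimComplex n) : ℕ :=
  Set.ncard {F : Finset (Fin n) | Δ.IsFacet F ∧ ((F.card : ℤ) - 1 = Δ.dim)}

end SimComplex

/-- An ideal is a complete intersection ideal if it is generated by a regular
sequence. -/
def IsCompleteIntersectionIdeal {R : Type*} [CommRing R] (I : Ideal R) : Prop :=
  ∃ rs : List R, RingTheory.Sequence.IsRegular R rs ∧ I = Ideal.span {x | x ∈ rs}

/-- The Stanley–Reisner ideal of a complex: the ideal generated by the
squarefree monomials corresponding to nonfaces. -/
noncomputable def srIdeal (K : Type*) [Field K] {n : ℕ} (Δ : SimComplex n) :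
    Ideal (MvPolynomial (Fin n) K) :=
  Ideal.span {m | ∃ F : Finset (Fin n), F ∉ Δ.faces ∧ m = ∏ i ∈ F, X i}

/-- A complete intersection complex: one whose Stanley–Reisner ideal is
generated by a regular sequence. -/
def IsCIComplex (K : Type*) [Field K] {n : ℕ} (Δ : SimComplex n) : Prop :=
  IsCompleteIntersectionIdeal (srIdeal K Δ)

/-- A locally complete intersection complex: the Stanley-Reisner ideal of the
link of every vertex is a complete intersection ideal. -/
def LocallyCI (K : Type*) [Field K] {n : ℕ} (Δ : SimComplex n) : Prop :=
  ∀ (v : Fin n) (h : ({v} : Finset (Fin n)) ∈ Δ.faces), IsCIComplex K (Δ.link {v} h)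

/-- A (graded or local) ring is a complete intersection ring if it admits a
presentation as a polynomial ring modulo an ideal generated by a regular
sequence. -/
def IsCompleteIntersectionRing (K : Type*) [Field K] (R : Type*) [CommRing R]
    [Algebra K R] : Prop :=
  ∃ (m : ℕ) (J : Ideal (MvPolynomial (Fin m) K)),
    IsCompleteIntersectionIdeal J ∧
      Nonempty ((MvPolynomial (Fin m) K ⧸ J) ≃ₐ[K] R)

/-- The depth of a ring `R` with respect to an ideal `J`: the supremum of the
lengths of regular sequences contained in `J`. -/
noncomputable def ringDepth (R : Type*) [CommRing R] (J : Ideal R) : ℕ :=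
  sSup {d : ℕ | ∃ rs : List R, rs.length = d ∧ (∀ r ∈ rs, r ∈ J) ∧
    RingTheory.Sequence.IsRegular R rs}

/-- Serre's condition `(S₂)`: `depth R_P ≥ min (dim R_P) 2` for every prime. -/
def SerreS2 (R : Type*) [CommRing R] : Prop :=
  ∀ (P : Ideal R) (hP : P.IsPrime),
    letI := hP
    min (ringKrullDim (Localization.AtPrime P)) 2 ≤
      (ringDepth (Localization.AtPrime P) (IsLocalRing.maximalIdeal _) : WithBot (WithTop ℕ))

/-- The homogeneous maximal ideal of the quotient of a polynomial ring by a
homogeneous ideal. -/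
noncomputable def quotMaxIdeal (K : Type*) [Field K] {n : ℕ} (I : Ideal (MvPolynomial (Fin n) K)) :
    Ideal (MvPolynomial (Fin n) K ⧸ I) :=
  (Ideal.span (Set.range X)).map (Ideal.Quotient.mk I)

/-- A standard graded algebra `S/I` is Cohen–Macaulay iff it admits a regular
sequence, inside the homogeneous maximal ideal, of length equal to its Krull
dimension. -/
def IsCohenMacaulayQuot (K : Type*) [Field K] {n : ℕ}
    (I : Ideal (MvPolynomial (Fin n) K)) : Prop :=
  ∃ rs : List (MvPolynomial (Fin n) K ⧸ I),
    (∀ r ∈ rs, r ∈ quotMaxIdeal K I) ∧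
    RingTheory.Sequence.IsRegular (MvPolynomial (Fin n) K ⧸ I) rs ∧
    ringKrullDim (MvPolynomial (Fin n) K ⧸ I) = rs.length

/-- A standard graded algebra `A = S/I` is Buchsbaum iff every system of
parameters is a weak `A`-sequence (Stückrad–Vogel):
`(x₁, …, x_{i-1}) : x_i ⊆ (x₁, …, x_{i-1}) : 𝔪`. -/
def IsBuchsbaumQuot (K : Type*) [Field K] {n : ℕ}
    (I : Ideal (MvPolynomial (Fin n) K)) : Prop :=
  ∀ d : ℕ, ringKrullDim (MvPolynomial (Fin n) K ⧸ I) = d →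
    ∀ x : Fin d → (MvPolynomial (Fin n) K ⧸ I),
      (∀ i, x i ∈ quotMaxIdeal K I) →
      ringKrullDim ((MvPolynomial (Fin n) K ⧸ I) ⧸ Ideal.span (Set.range x)) ≤ 0 →
      ∀ (i : Fin d) (a : MvPolynomial (Fin n) K ⧸ I),
        a * x i ∈ Ideal.span (x '' {j | j < i}) →
        ∀ b ∈ quotMaxIdeal K I, a * b ∈ Ideal.span (x '' {j | j < i})

/-- A standard graded algebra `A = S/I` is Gorenstein iff it admits a system of
parameters which is a regular sequence generating an irreducible ideal. -/
def IsGorensteinQuot (K : Type*) [Field K] {n : ℕ}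
    (I : Ideal (MvPolynomial (Fin n) K)) : Prop :=
  ∃ rs : List (MvPolynomial (Fin n) K ⧸ I),
    (∀ r ∈ rs, r ∈ quotMaxIdeal K I) ∧
    RingTheory.Sequence.IsRegular (MvPolynomial (Fin n) K ⧸ I) rs ∧
    ringKrullDim (MvPolynomial (Fin n) K ⧸ I) = rs.length ∧
    ∀ J₁ J₂ : Ideal (MvPolynomial (Fin n) K ⧸ I),
      Ideal.span {x | x ∈ rs} = J₁ ⊓ J₂ →
      Ideal.span {x | x ∈ rs} = J₁ ∨ Ideal.span {x | x ∈ rs} = J₂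

/-- The cumulative Hilbert function of `S/I`: the `K`-dimension of the image of
the polynomials of total degree at most `t`. -/
noncomputable def hilbFn (K : Type*) [Field K] {n : ℕ}
    (I : Ideal (MvPolynomial (Fin n) K)) (t : ℕ) : ℕ :=
  Module.finrank K (Submodule.map (Ideal.Quotient.mkₐ K I).toLinearMap
    (MvPolynomial.restrictTotalDegree (Fin n) K t))

/-- `S/I` has (Hilbert–Samuel) multiplicity `e`: writing `d = dim S/I`, the
cumulative Hilbert function satisfies `dim_K (S/I)_{≤ t} ∼ e·t^d/d!`. -/
def HasMultiplicity (K : Type*) [Field K] {n : ℕ}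
    (I : Ideal (MvPolynomial (Fin n) K)) (e : ℕ) : Prop :=
  ∃ d : ℕ, ringKrullDim (MvPolynomial (Fin n) K ⧸ I) = d ∧
    Filter.Tendsto
      (fun t : ℕ => ((d.factorial * hilbFn K I t : ℕ) : ℝ) / (t : ℝ) ^ d)
      Filter.atTop (nhds (e : ℝ))

/-- The Stanley–Reisner ideal of a complex relative to its own vertex set
(generated only by the monomials of nonfaces supported on the vertices). -/
noncomputable def relSRIdeal (K : Type*) [Field K] {n : ℕ} (Δ : SimComplex n) :
    Ideal (MvPolynomial (Fin n) K) :=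
  Ideal.span {m | ∃ F : Finset (Fin n), (F : Set (Fin n)) ⊆ Δ.vertices ∧
    F ∉ Δ.faces ∧ m = ∏ i ∈ F, X i}

/-!
Split the vertices into the non-neighbours `x` of `y` and the rest, `y` together with its
neighbours; connectedness gives `y` a neighbour, so both parts have at least two elements.
If a neighbour `z` of `y` were adjacent to two non-neighbours `b ≠ c` of `y`, the link of `z`
would contain `y, b, c` and have the minimal nonfaces `{y, b}`, `{y, c}`. Such a Stanley–Reisner
ideal is not generated by a regular sequence: the relation `X c · (X y X b) = X b · (X y X c)`
is a syzygy, syzygies of a regular sequence have coefficients in the ideal, and comparing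
coefficients shows that in any `X y X b = ∑ fᵢ rᵢ` all `fᵢ` have zero constant term, which
leaves no room for the monomial `X y X b` itself.
-/

open Finset

section

variable {R : Type*} [CommRing R]

lemma Ideal.mem_of_isSMulRegular_of_mul_mem {I : Ideal R} {r c : R}
    (hr : IsSMulRegular (R ⧸ (I • ⊤ : Submodule R R)) r) (h : r * c ∈ I) : c ∈ I := by
  rw [Ideal.smul_eq_mul, Ideal.mul_top] at hr
  refine Ideal.Quotient.eq_zero_iff_mem.mp (hr ?_)
  change Ideal.Quotient.mk I (r * c) = r • 0
  rw [smul_zero, Ideal.Quotient.eq_zero_iff_mem]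
  exact h

namespace RingTheory.Sequence

lemma getD_mem_ofList {l : List R} {i : ℕ} (hi : i < l.length) :
    l.getD i 0 ∈ Ideal.ofList l := by
  rw [List.getD_eq_getElem _ _ hi]
  exact Ideal.subset_span (List.getElem_mem hi)

lemma mem_ofList_iff_exists_sum {l : List R} {x : R} :
    x ∈ Ideal.ofList l ↔ ∃ c : ℕ → R, x = ∑ i ∈ range l.length, c i * l.getD i 0 := by
  rw [Ideal.ofList, ← Set.range_list_get, Ideal.mem_span_range_iff_exists_fun]
  constructor
  · rintro ⟨c, rfl⟩
    refine ⟨fun i => if h : i < l.length then c ⟨i, h⟩ else 0, ?_⟩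
    rw [← Fin.sum_univ_eq_sum_range]
    simp
  · rintro ⟨c, rfl⟩
    refine ⟨fun i => c i, ?_⟩
    rw [← Fin.sum_univ_eq_sum_range]
    simp

lemma sum_range_length_append_singleton (l : List R) (r : R) (c : ℕ → R) :
    ∑ i ∈ range (l ++ [r]).length, c i * (l ++ [r]).getD i 0 =
      ∑ i ∈ range l.length, c i * l.getD i 0 + c l.length * r := by
  rw [List.length_append, List.length_singleton, sum_range_succ]
  congr 1
  · refine sum_congr rfl fun i hi => ?_
    rw [List.getD_append _ _ _ _ (mem_range.mp hi)]
  · simp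

/-- Syzygies of a weakly regular sequence are Koszul. -/
lemma IsWeaklyRegular.mem_ofList_of_sum_eq_zero {l : List R} (hl : IsWeaklyRegular R l)
    {c : ℕ → R} (hc : ∑ i ∈ range l.length, c i * l.getD i 0 = 0) :
    ∀ i < l.length, c i ∈ Ideal.ofList l := by
  induction l using List.reverseRecOn generalizing c with
  | nil => simp
  | append_singleton l r ih =>
    rw [isWeaklyRegular_append_iff, isWeaklyRegular_singleton_iff] at hl
    rw [sum_range_length_append_singleton] at hc
    have hlast : c l.length ∈ Ideal.ofList l := by
      refine Ideal.mem_of_isSMulRegular_of_mul_mem hl.2 ?_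
      rw [mul_comm, eq_neg_of_add_eq_zero_right hc]
      exact neg_mem (sum_mem fun i hi =>
        Ideal.mul_mem_left _ _ (getD_mem_ofList (mem_range.mp hi)))
    obtain ⟨d, hd⟩ := mem_ofList_iff_exists_sum.mp hlast
    have hshift : ∑ i ∈ range l.length, (c i + d i * r) * l.getD i 0 = 0 := by
      calc ∑ i ∈ range l.length, (c i + d i * r) * l.getD i 0
          = ∑ i ∈ range l.length, c i * l.getD i 0
              + (∑ i ∈ range l.length, d i * l.getD i 0) * r := by
            rw [sum_mul, ← sum_add_distrib]
            exact sum_congr rfl fun i _ => by ring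
        _ = 0 := by rw [← hd, hc]
    have hle : Ideal.ofList l ≤ Ideal.ofList (l ++ [r]) := by simp
    have hr : r ∈ Ideal.ofList (l ++ [r]) := Ideal.subset_span (by simp)
    intro i hi
    rcases (Nat.lt_succ_iff_lt_or_eq.mp (by simpa using hi)) with hi | rfl
    · simpa using sub_mem (hle (ih hl.1 hshift i hi)) (Ideal.mul_mem_left _ (d i) hr)
    · exact hle hlast

end RingTheory.Sequence

end

section SquarefreeMonomial

variable {σ : Type*}

noncomputable def sqfreeExponent (F : Finset σ) : σ →₀ ℕ :=
  ∑ i ∈ F, Finsupp.single i 1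

lemma sqfreeExponent_apply [DecidableEq σ] (F : Finset σ) (j : σ) :
    sqfreeExponent F j = if j ∈ F then 1 else 0 := by
  simp [sqfreeExponent, Finsupp.finsetSum_apply, Finsupp.single_apply]

lemma subset_of_sqfreeExponent_le {F G : Finset σ} (h : sqfreeExponent F ≤ sqfreeExponent G) :
    F ⊆ G := by
  classical
  intro i hi
  by_contra hG
  simpa [sqfreeExponent_apply, hi, hG] using h i

lemma prod_X_eq_monomial_sqfreeExponent {R : Type*} [CommSemiring R] (F : Finset σ) :
    (∏ i ∈ F, X i : MvPolynomial σ R) = monomial (sqfreeExponent F) 1 :=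
  (monomial_sum_one F fun i => Finsupp.single i 1).symm

end SquarefreeMonomial

namespace SimComplex

variable {n : ℕ}

lemma link_faces_subset (Δ : SimComplex n) (F : Finset (Fin n)) (hF : F ∈ Δ.faces) :
    (Δ.link F hF).faces ⊆ Δ.faces :=
  fun _ hG => Δ.down_closed hG.2 subset_union_left

lemma singleton_mem_link_faces (Δ : SimComplex n) {w z : Fin n} (hz : {z} ∈ Δ.faces)
    (hwz : w ≠ z) (h : {w, z} ∈ Δ.faces) : {w} ∈ (Δ.link {z} hz).faces :=
  ⟨disjoint_singleton.mpr hwz, by rwa [← insert_eq]⟩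

lemma eq_pair_of_subset_pair {Δ : SimComplex n} {a b : Fin n} {F : Finset (Fin n)}
    (ha : {a} ∈ Δ.faces) (hb : {b} ∈ Δ.faces) (hF : F ∉ Δ.faces) (hsub : F ⊆ {a, b}) :
    F = {a, b} := by
  by_cases haF : a ∈ F
  · by_cases hbF : b ∈ F
    · exact hsub.antisymm (insert_subset haF (singleton_subset_iff.mpr hbF))
    · rw [pair_comm, subset_insert_iff_of_notMem hbF] at hsub
      exact absurd (Δ.down_closed ha hsub) hF
  · rw [subset_insert_iff_of_notMem haF] at hsub
    exact absurd (Δ.down_closed hb hsub) hF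

/-- An isolated vertex would split off a connected component. -/
lemma Connected.exists_pair_mem {Δ : SimComplex n} (hconn : Δ.Connected) {x y : Fin n}
    (hx : x ∈ Δ.vertices) (hy : y ∈ Δ.vertices) (hxy : x ≠ y) :
    ∃ z, z ≠ y ∧ {y, z} ∈ Δ.faces := by
  by_contra! hiso
  refine hconn ⟨{y}, Δ.vertices \ {y}, Set.singleton_nonempty y, ⟨x, hx, hxy⟩,
    Set.disjoint_sdiff_right, Set.union_sdiff_cancel (Set.singleton_subset_iff.mpr hy),
    fun F hF => ?_⟩
  by_cases hyF : y ∈ F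
  · refine Or.inl fun v hv => by_contra fun hvy => hiso v hvy ?_
    exact Δ.down_closed hF (insert_subset hyF (singleton_subset_iff.mpr hv))
  · exact Or.inr fun v hv => ⟨Δ.down_closed hF (singleton_subset_iff.mpr hv),
      fun h => hyF (h ▸ hv)⟩

end SimComplex

section StanleyReisner

open SimComplex

variable (K : Type*) [Field K] {n : ℕ} {Δ : SimComplex n}

lemma srIdeal_eq_span_monomial (Δ : SimComplex n) :
    srIdeal K Δ = Ideal.span ((fun s => monomial s (1 : K)) '' (sqfreeExponent '' Δ.facesᶜ)) := by
  rw [srIdeal, Set.image_image]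
  congr 1
  ext m
  simp [prod_X_eq_monomial_sqfreeExponent, eq_comm]

variable {K}

lemma exists_notMem_faces_sqfreeExponent_le {g : MvPolynomial (Fin n) K} (hg : g ∈ srIdeal K Δ)
    {u : Fin n →₀ ℕ} (hu : u ∈ g.support) : ∃ F ∉ Δ.faces, sqfreeExponent F ≤ u := by
  rw [srIdeal_eq_span_monomial, mem_ideal_span_monomial_image] at hg
  obtain ⟨_, ⟨F, hF, rfl⟩, hle⟩ := hg u hu
  exact ⟨F, hF, hle⟩

lemma X_mul_X_mem_srIdeal_iff {u v : Fin n} (huv : u ≠ v) :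
    (X u * X v : MvPolynomial (Fin n) K) ∈ srIdeal K Δ ↔ {u, v} ∉ Δ.faces := by
  rw [← prod_pair huv]
  refine ⟨fun h hface => ?_, fun h => Ideal.subset_span ⟨_, h, rfl⟩⟩
  rw [prod_X_eq_monomial_sqfreeExponent] at h
  obtain ⟨F, hF, hle⟩ := exists_notMem_faces_sqfreeExponent_le (u := sqfreeExponent {u, v}) h
    (by simp [mem_support_iff, coeff_monomial])
  exact hF (Δ.down_closed hface (subset_of_sqfreeExponent_le hle))

lemma coeff_single_eq_zero_of_mem_srIdeal {c : Fin n} (hc : {c} ∈ Δ.faces)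
    {g : MvPolynomial (Fin n) K} (hg : g ∈ srIdeal K Δ) : coeff (Finsupp.single c 1) g = 0 := by
  by_contra h
  obtain ⟨F, hF, hle⟩ := exists_notMem_faces_sqfreeExponent_le hg (mem_support_iff.mpr h)
  refine hF (Δ.down_closed hc (subset_of_sqfreeExponent_le (hle.trans_eq ?_)))
  simp [sqfreeExponent]

/-- Every monomial of `r` is divisible by the monomial of a nonface, which for a nonface
inside `{a, b}` is `X a * X b` itself; so only the constant term of `f` contributes. -/
lemma coeff_pair_mul_of_mem_srIdeal {a b : Fin n} (ha : {a} ∈ Δ.faces) (hb : {b} ∈ Δ.faces)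
    {r : MvPolynomial (Fin n) K} (hr : r ∈ srIdeal K Δ) (f : MvPolynomial (Fin n) K) :
    coeff (sqfreeExponent {a, b}) (f * r) = coeff 0 f * coeff (sqfreeExponent {a, b}) r := by
  classical
  rw [coeff_mul]
  refine sum_eq_single (0, sqfreeExponent {a, b}) (fun ⟨u, v⟩ huv hne => ?_)
    (fun h => absurd (HasAntidiagonal.mem_antidiagonal.mpr (zero_add _)) h)
  rw [HasAntidiagonal.mem_antidiagonal] at huv
  by_contra hne0
  obtain ⟨F, hF, hFv⟩ := exists_notMem_faces_sqfreeExponent_le hr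
    (mem_support_iff.mpr (right_ne_zero_of_mul hne0))
  have hvle : v ≤ sqfreeExponent {a, b} := huv ▸ le_add_self
  have hFab := eq_pair_of_subset_pair ha hb hF (subset_of_sqfreeExponent_le (hFv.trans hvle))
  have hv : v = sqfreeExponent {a, b} := hvle.antisymm (hFab ▸ hFv)
  exact hne (Prod.ext (by rw [hv] at huv; exact add_eq_right.mp huv) hv)

/-- Writing `X a * X b = ∑ fᵢ rᵢ` and `X a * X c = ∑ hᵢ rᵢ` in a regular sequence `rᵢ`, the
coefficients `X c fᵢ - X b hᵢ` of the syzygy lie in the ideal; their coefficient of `X c` shows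
`fᵢ(0) = 0`, and then the coefficient of `X a X b` in `∑ fᵢ rᵢ` vanishes. -/
theorem not_isCompleteIntersectionIdeal_srIdeal {a b c : Fin n} (hab : a ≠ b) (hac : a ≠ c)
    (hbc : b ≠ c) (ha : {a} ∈ Δ.faces) (hb : {b} ∈ Δ.faces) (hc : {c} ∈ Δ.faces)
    (hnab : {a, b} ∉ Δ.faces) (hnac : {a, c} ∉ Δ.faces) :
    ¬ IsCompleteIntersectionIdeal (srIdeal K Δ) := by
  rintro ⟨rs, hreg, hI⟩
  change srIdeal K Δ = Ideal.ofList rs at hI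
  have hrs : ∀ i < rs.length, rs.getD i 0 ∈ srIdeal K Δ := fun i hi =>
    hI ▸ RingTheory.Sequence.getD_mem_ofList hi
  obtain ⟨f, hf⟩ := RingTheory.Sequence.mem_ofList_iff_exists_sum.mp
    (hI ▸ (X_mul_X_mem_srIdeal_iff hab).mpr hnab)
  obtain ⟨h, hh⟩ := RingTheory.Sequence.mem_ofList_iff_exists_sum.mp
    (hI ▸ (X_mul_X_mem_srIdeal_iff hac).mpr hnac)
  have hsyz : ∀ i < rs.length, X c * f i - X b * h i ∈ srIdeal K Δ := by
    rw [hI]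
    refine hreg.toIsWeaklyRegular.mem_ofList_of_sum_eq_zero ?_
    calc ∑ i ∈ range rs.length, (X c * f i - X b * h i) * rs.getD i 0
        = X c * ∑ i ∈ range rs.length, f i * rs.getD i 0
            - X b * ∑ i ∈ range rs.length, h i * rs.getD i 0 := by
          rw [mul_sum, mul_sum, ← sum_sub_distrib]
          exact sum_congr rfl fun i _ => by ring
      _ = 0 := by rw [← hf, ← hh]; ring
  have hf0 : ∀ i < rs.length, coeff 0 (f i) = 0 := fun i hi => by
    simpa [coeff_X_mul', hbc, Finsupp.single_apply] using
      coeff_single_eq_zero_of_mem_srIdeal hc (hsyz i hi)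
  have hcoeff : coeff (sqfreeExponent {a, b}) (X a * X b : MvPolynomial (Fin n) K) = 0 := by
    rw [hf, coeff_sum]
    refine sum_eq_zero fun i hi => ?_
    rw [coeff_pair_mul_of_mem_srIdeal ha hb (hrs i (mem_range.mp hi)), hf0 i (mem_range.mp hi),
      zero_mul]
  rw [← prod_pair hab, prod_X_eq_monomial_sqfreeExponent, coeff_monomial, if_pos rfl] at hcoeff
  exact one_ne_zero hcoeff

/-- Otherwise the link of `z` has the minimal nonfaces `{y, b}` and `{y, c}` through `y`. -/
theorem LocallyCI.eq_of_pair_mem_of_pair_notMem (hlci : LocallyCI K Δ) {y z b c : Fin n}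
    (hyz : y ≠ z) (hyz' : {y, z} ∈ Δ.faces) (hbz : {b, z} ∈ Δ.faces) (hcz : {c, z} ∈ Δ.faces)
    (hyb : {y, b} ∉ Δ.faces) (hyc : {y, c} ∉ Δ.faces) : b = c := by
  by_contra hbc
  have hz : {z} ∈ Δ.faces := Δ.down_closed hyz' (by simp)
  have hy : {y} ∈ Δ.faces := Δ.down_closed hyz' (by simp)
  have hyb' : y ≠ b := by rintro rfl; exact hyb (by simpa using hy)
  have hyc' : y ≠ c := by rintro rfl; exact hyc (by simpa using hy)
  have hbz' : b ≠ z := by rintro rfl; exact hyb hyz'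
  have hcz' : c ≠ z := by rintro rfl; exact hyc hyz'
  exact not_isCompleteIntersectionIdeal_srIdeal hyb' hyc' hbc
    (Δ.singleton_mem_link_faces hz hyz hyz') (Δ.singleton_mem_link_faces hz hbz' hbz)
    (Δ.singleton_mem_link_faces hz hcz' hcz) (mt (Δ.link_faces_subset _ hz ·) hyb)
    (mt (Δ.link_faces_subset _ hz ·) hyc) (hlci z hz)

end StanleyReisner

lemma Finset.exists_fin_enum_of_mem {α : Type*} {s : Finset α} {a : α} (ha : a ∈ s)
    (hs : 2 ≤ #s) :
    ∃ (k : ℕ) (f : Fin (k + 2) → α), Function.Injective f ∧ Set.range f = s ∧ f 0 = a := by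
  obtain ⟨k, hk⟩ := Nat.exists_eq_add_of_le' hs
  let e : Fin (k + 2) ≃ s := (finCongr hk.symm).trans s.equivFin.symm
  let e' : Fin (k + 2) ≃ s := (Equiv.swap 0 (e.symm ⟨a, ha⟩)).trans e
  refine ⟨k, fun i => e' i, Subtype.val_injective.comp e'.injective, ?_, by simp [e']⟩
  rw [Set.range_comp' Subtype.val e', e'.surjective.range_eq, Set.image_univ, Subtype.range_coe]

theorem key_labeling_lemma_general (K : Type) [Field K] {n : ℕ} (Δ : SimComplex n)
    (hfull : Δ.OnFullVertexSet) (hconn : Δ.Connected)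
    (hlci : LocallyCI K Δ) (x₁ x₂ y : Fin n)
    (h12 : x₁ ≠ x₂) (h1y : x₁ ≠ y) (h2y : x₂ ≠ y)
    (hm1 : (X x₁ * X y : MvPolynomial (Fin n) K) ∈ srIdeal K Δ)
    (hm2 : (X x₂ * X y : MvPolynomial (Fin n) K) ∈ srIdeal K Δ) :
    ∃ (k ℓ : ℕ) (xs : Fin (k + 2) → Fin n) (ys : Fin (ℓ + 2) → Fin n),
      Function.Injective xs ∧ Function.Injective ys ∧
      (∀ i j, xs i ≠ ys j) ∧
      (Set.range xs ∪ Set.range ys = Set.univ) ∧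
      ys 0 = y ∧
      (∀ i, (X (xs i) * X (ys 0) : MvPolynomial (Fin n) K) ∈ srIdeal K Δ) ∧
      (∀ j : Fin (ℓ + 2), j ≠ 0 →
        (X (ys 0) * X (ys j) : MvPolynomial (Fin n) K) ∉ srIdeal K Δ) ∧
      (∀ j : Fin (ℓ + 2), j ≠ 0 →
        {i : Fin (k + 2) |
          (X (xs i) * X (ys j) : MvPolynomial (Fin n) K) ∉ srIdeal K Δ}.Subsingleton) := by
  classical
  set Xs := univ.filter fun v => {y, v} ∉ Δ.faces
  have hXs : ∀ v, v ∈ Xs ↔ {y, v} ∉ Δ.faces := fun v => by simp [Xs]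
  have hx₁ : x₁ ∈ Xs := (hXs x₁).mpr (pair_comm x₁ y ▸ (X_mul_X_mem_srIdeal_iff h1y).mp hm1)
  have hx₂ : x₂ ∈ Xs := (hXs x₂).mpr (pair_comm x₂ y ▸ (X_mul_X_mem_srIdeal_iff h2y).mp hm2)
  have hy : y ∈ Xsᶜ := by simpa [hXs] using hfull y
  obtain ⟨z, hzy, hyz⟩ := hconn.exists_pair_mem (hfull x₁) (hfull y) h1y
  have hz : z ∈ Xsᶜ := by simpa [hXs] using hyz
  obtain ⟨k, xs, hxs, hxsXs, -⟩ :=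
    exists_fin_enum_of_mem hx₁ (one_lt_card.mpr ⟨x₁, hx₁, x₂, hx₂, h12⟩)
  obtain ⟨ℓ, ys, hys, hysXs, hy0⟩ :=
    exists_fin_enum_of_mem hy (one_lt_card.mpr ⟨y, hy, z, hz, hzy.symm⟩)
  have hxs_mem (i) : xs i ∈ Xs := mem_coe.mp (hxsXs ▸ Set.mem_range_self i)
  have hys_mem (j) : ys j ∉ Xs := mem_compl.mp (mem_coe.mp (hysXs ▸ Set.mem_range_self j))
  have hxs_ne (i j) : xs i ≠ ys j := fun h => hys_mem j (h ▸ hxs_mem i)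
  have hys_ne {j} (hj : j ≠ 0) : y ≠ ys j := hy0 ▸ hys.ne hj.symm
  refine ⟨k, ℓ, xs, ys, hxs, hys, hxs_ne, ?_, hy0, fun i => ?_, fun j hj => ?_,
    fun j hj i hi i' hi' => hxs ?_⟩
  · rw [hxsXs, hysXs, coe_compl, Set.union_compl_self]
  · rw [hy0, X_mul_X_mem_srIdeal_iff (hy0 ▸ hxs_ne i 0), pair_comm]
    exact (hXs _).mp (hxs_mem i)
  · rw [hy0, X_mul_X_mem_srIdeal_iff (hys_ne hj), not_not]
    simpa [hXs] using hys_mem j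
  · rw [Set.mem_ofPred_eq, X_mul_X_mem_srIdeal_iff (hxs_ne _ _), not_not] at hi hi'
    exact hlci.eq_of_pair_mem_of_pair_notMem (hys_ne hj) (by simpa [hXs] using hys_mem j)
      hi hi' ((hXs _).mp (hxs_mem i)) ((hXs _).mp (hxs_mem i'))

/-- **Lemma 1.8 (Key Lemma).** Let `Δ` be a connected locally complete
intersection complex of dimension `d - 1 ≥ 1` having distinct vertices
`x₁, x₂, y` with `X₁Y, X₂Y ∈ I_Δ`.  Then the vertex set can be labeled
`V = {x_1, …, x_k, y_1, …, y_ℓ}` (with `k, ℓ ≥ 2` and `y₁ = y`) so that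
`X_iY_1 ∈ I_Δ` for all `i`, `Y_1Y_j ∉ I_Δ` for `j ≥ 2`, and for each `j ≥ 2`
at most one index `i` satisfies `X_iY_j ∉ I_Δ`. -/
theorem key_labeling_lemma (K : Type) [Field K] {n : ℕ} (Δ : SimComplex n)
    (hfull : Δ.OnFullVertexSet) (hconn : Δ.Connected) (hdim : 1 ≤ Δ.dim)
    (hlci : LocallyCI K Δ) (x₁ x₂ y : Fin n)
    (h12 : x₁ ≠ x₂) (h1y : x₁ ≠ y) (h2y : x₂ ≠ y)
    (hm1 : (X x₁ * X y : MvPolynomial (Fin n) K) ∈ srIdeal K Δ)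
    (hm2 : (X x₂ * X y : MvPolynomial (Fin n) K) ∈ srIdeal K Δ) :
    ∃ (k ℓ : ℕ) (xs : Fin (k + 2) → Fin n) (ys : Fin (ℓ + 2) → Fin n),
      Function.Injective xs ∧ Function.Injective ys ∧
      (∀ i j, xs i ≠ ys j) ∧
      (Set.range xs ∪ Set.range ys = Set.univ) ∧
      ys 0 = y ∧
      (∀ i, (X (xs i) * X (ys 0) : MvPolynomial (Fin n) K) ∈ srIdeal K Δ) ∧
      (∀ j : Fin (ℓ + 2), j ≠ 0 →
        (X (ys 0) * X (ys j) : MvPolynomial (Fin n) K) ∉ srIdeal K Δ) ∧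
      (∀ j : Fin (ℓ + 2), j ≠ 0 →
        {i : Fin (k + 2) |
          (X (xs i) * X (ys j) : MvPolynomial (Fin n) K) ∉ srIdeal K Δ}.Subsingleton) :=
  key_labeling_lemma_general K Δ hfull hconn hlci x₁ x₂ y h12 h1y h2y hm1 hm2
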